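/- Let w* = (1/(‖μ‖₂·√(1+γ²)))·[μ, −γμ, 0_d] ∈ ℝ^{3d}. Then w* has the least 0-1 classification error on the context-c2 distribution among all norm-bounded linear predictors: for every w ∈ W1, Acc_{P_{c2}}(w) ≤ Acc_{P_{c2}}(w*). -/

import Mathlib

open MeasureTheory ProbabilityTheory Real Filter
open scoped ENNReal NNReal

noncomputable section

/-- Complementary error function `erfc x = (2/√π) ∫_x^∞ e^{−t²} dt`. -/
def erfc (x : ℝ) : ℝ := 2 / Real.sqrt Real.pi * ∫ t in Set.Ioi x, Real.exp (-t ^ 2)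

/-- A vector in `ℝ^d`. -/
abbrev Vec (d : ℕ) := Fin d → ℝ

/-- The input space `ℝ^{3d}`, viewed as three blocks `x = [x1, x2, x3]`. -/
abbrev Inp (d : ℕ) := Vec d × Vec d × Vec d

/-- Euclidean dot product on `ℝ^d`. -/
def dot {d : ℕ} (v w : Vec d) : ℝ := ∑ i, v i * w i

/-- Euclidean norm on `ℝ^d`. -/
def vnorm {d : ℕ} (v : Vec d) : ℝ := Real.sqrt (∑ i, v i ^ 2)

/-- Euclidean norm on the full input space `ℝ^{3d}`. -/
def xnorm {d : ℕ} (x : Inp d) : ℝ :=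
  Real.sqrt ((∑ i, x.1 i ^ 2) + (∑ i, x.2.1 i ^ 2) + ∑ i, x.2.2 i ^ 2)

/-- Value `wᵀx` of the linear predictor `w` at input `x`. -/
def pred {d : ℕ} (w x : Inp d) : ℝ := dot w.1 x.1 + dot w.2.1 x.2.1 + dot w.2.2 x.2.2

/-- Isotropic Gaussian `N(m, v·I_d)` on `ℝ^d` (product of coordinate Gaussians). -/
def gaussVec (d : ℕ) (m : Vec d) (v : ℝ) : Measure (Vec d) :=
  Measure.pi fun i => gaussianReal (m i) (Real.toNNReal v)

/-- Conditional law of `x` given the label `y` in context `c1`: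
`x1 ~ N(μy, σ²I)`, `x2 ~ N(μy, γσ²I)`, `x3 ~ N(μ, η²I)`, independent blocks. -/
def condX1 (d : ℕ) (μ : Vec d) (σ γ η : ℝ) (y : ℝ) : Measure (Inp d) :=
  (gaussVec d (fun i => μ i * y) (σ ^ 2)).prod
    ((gaussVec d (fun i => μ i * y) (γ * σ ^ 2)).prod
      (gaussVec d μ (η ^ 2)))

/-- Conditional law of `x` given the label `y` in context `c2`:
`x1 ~ N(μy, σ²I)`, `x2 ~ N(−μy, (σ²/γ)I)`, `x3 ~ N(−μ, η²I)`, independent blocks. -/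
def condX2 (d : ℕ) (μ : Vec d) (σ γ η : ℝ) (y : ℝ) : Measure (Inp d) :=
  (gaussVec d (fun i => μ i * y) (σ ^ 2)).prod
    ((gaussVec d (fun i => -μ i * y) (σ ^ 2 / γ)).prod
      (gaussVec d (fun i => -μ i) (η ^ 2)))

/-- Joint law of `(x, y)`: `y` uniform on `{−1, 1}`, then `x ~ cond y`. -/
def jointOf {d : ℕ} (cond : ℝ → Measure (Inp d)) : Measure (Inp d × ℝ) :=
  (2 : ℝ≥0∞)⁻¹ • (cond 1).prod (Measure.dirac (1 : ℝ))
    + (2 : ℝ≥0∞)⁻¹ • (cond (-1)).prod (Measure.dirac (-1 : ℝ))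

/-- The context-`c1` distribution over `(x, y)`. -/
def Pc1 (d : ℕ) (μ : Vec d) (σ γ η : ℝ) : Measure (Inp d × ℝ) :=
  jointOf (condX1 d μ σ γ η)

/-- The context-`c2` distribution over `(x, y)`. -/
def Pc2 (d : ℕ) (μ : Vec d) (σ γ η : ℝ) : Measure (Inp d × ℝ) :=
  jointOf (condX2 d μ σ γ η)

/-- Accuracy `Acc_P(w) = P(sign(wᵀx) = y)` of linear predictor `w` under joint law `P`. -/
def AccP {d : ℕ} (P : Measure (Inp d × ℝ)) (w : Inp d) : ℝ :=
  (P {p | Real.sign (pred w p.1) = p.2}).toReal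

/-- Norm-bounded linear predictors `W1 = {w ∈ ℝ^{3d} : ‖w‖₂ ≤ 1}`. -/
def W1 (d : ℕ) : Set (Inp d) := {w | xnorm w ≤ 1}

/-- Population exponential loss `E_P[exp(−y·wᵀx)]`. -/
def expLoss {d : ℕ} (P : Measure (Inp d × ℝ)) (w : Inp d) : ℝ :=
  ∫ p, Real.exp (-(p.2 * pred w p.1)) ∂P

end

/-!
Given `y`, the score `wᵀx` is Gaussian under `P_{c2}`, with mean `y s - c` and variance `V`, where
`s = ⟨w₁, μ⟩ - ⟨w₂, μ⟩`, `c = ⟨w₃, μ⟩` and `V = σ²‖w₁‖² + (σ²/γ)‖w₂‖² + η²‖w₃‖²`. Hence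
`Acc(w) = (Φ((s - c)/√V) + Φ((s + c)/√V)) / 2`. The two arguments sum to `2 s/√V`, and a weighted
Cauchy–Schwarz inequality bounds `s/√V` by `M = ‖μ‖ √(1 + γ) / σ`, with equality at `w*`, for which
`c = 0`. Finally `Φ p + Φ q ≤ 2 Φ M` whenever `p + q ≤ 2 M` and `M ≥ 0`: the Gaussian density is
symmetric and decreasing in `|x|`. Accuracy is invariant under positive rescaling, so `w*` may be
replaced by `[μ, -γμ, 0]`.
-/

open Set

local notation "Φ" => cdf (gaussianReal 0 1)

lemma gaussianPDFReal_le_of_sq_le {m x y : ℝ} (v : ℝ≥0) (h : (x - m) ^ 2 ≤ (y - m) ^ 2) :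
    gaussianPDFReal m v y ≤ gaussianPDFReal m v x := by
  unfold gaussianPDFReal
  gcongr

lemma cdf_gaussianReal_sub_cdf_eq_integral {a b : ℝ} (hab : a ≤ b) :
    Φ b - Φ a = ∫ x in a..b, gaussianPDFReal 0 1 x := by
  have h := (cdf (gaussianReal 0 1)).measure_Ioc a b
  rw [measure_cdf, gaussianReal_apply_eq_integral _ one_ne_zero,
    ENNReal.ofReal_eq_ofReal_iff (setIntegral_nonneg measurableSet_Ioc
      fun x _ => gaussianPDFReal_nonneg _ _ _) (sub_nonneg.2 (monotone_cdf _ hab))] at h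
  rw [← h, intervalIntegral.integral_of_le hab]

/-- Reflecting `[m - t, m]` about `m ≥ 0` moves it away from the origin, where the density is
smaller. -/
lemma cdf_gaussianReal_add_add_sub_le {m : ℝ} (hm : 0 ≤ m) (t : ℝ) :
    Φ (m + t) + Φ (m - t) ≤ 2 * Φ m := by
  wlog ht : 0 ≤ t generalizing t
  · simpa [← sub_eq_add_neg, add_comm] using this (-t) (by linarith)
  have hreflect : Φ (m + t) - Φ m = ∫ x in (m - t)..m, gaussianPDFReal 0 1 (2 * m - x) := by
    rw [cdf_gaussianReal_sub_cdf_eq_integral (by linarith), intervalIntegral.integral_comp_sub_left]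
    congr 1 <;> ring
  have hle : Φ (m + t) - Φ m ≤ Φ m - Φ (m - t) := by
    rw [hreflect, cdf_gaussianReal_sub_cdf_eq_integral (by linarith)]
    refine intervalIntegral.integral_mono_on (by linarith)
      ((integrable_gaussianPDFReal _ _).comp_sub_left _).intervalIntegrable
      (integrable_gaussianPDFReal _ _).intervalIntegrable fun x hx => ?_
    exact gaussianPDFReal_le_of_sq_le _ (by nlinarith [hx.2])
  linarith

lemma cdf_gaussianReal_add_cdf_le {p q M : ℝ} (hM : 0 ≤ M) (h : p + q ≤ 2 * M) :
    Φ p + Φ q ≤ 2 * Φ M := by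
  rcases le_or_gt 0 (p + q) with hpq | hpq
  · have hconc := cdf_gaussianReal_add_add_sub_le (m := (p + q) / 2) (by linarith) ((p - q) / 2)
    have hmono := monotone_cdf (gaussianReal 0 1) (show (p + q) / 2 ≤ M by linarith)
    rw [show (p + q) / 2 + (p - q) / 2 = p by ring, show (p + q) / 2 - (p - q) / 2 = q by ring]
      at hconc
    linarith
  · have hq := monotone_cdf (gaussianReal 0 1) (show q ≤ -p by linarith)
    have hconc := cdf_gaussianReal_add_add_sub_le le_rfl p
    have hmono := monotone_cdf (gaussianReal 0 1) hM
    rw [zero_add, zero_sub] at hconc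
    linarith

lemma gaussianReal_real_Ioi_zero (m : ℝ) {v : ℝ≥0} (hv : v ≠ 0) :
    (gaussianReal m v).real (Ioi 0) = Φ (m / √v) := by
  have hs : 0 < √(v : ℝ) := Real.sqrt_pos.2 (by positivity)
  have hstd : (gaussianReal m v).map (fun x => (m - x) / √v) = gaussianReal 0 1 := by
    rw [show (fun x => (m - x) / √v) = (· / √v) ∘ (m - ·) from rfl,
      ← Measure.map_map (by fun_prop) (by fun_prop), gaussianReal_map_const_sub,
      gaussianReal_map_div_const, sub_self, zero_div]
    congr 1
    ext
    simp [Real.sq_sqrt, hv]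
  have hpre : (fun x => (m - x) / √v) ⁻¹' Iio (m / √v) = Ioi 0 := by
    ext x
    simp [div_lt_div_iff_of_pos_right hs]
  have hatom : (gaussianReal 0 1) {m / √v} = 0 :=
    gaussianReal_absolutelyContinuous 0 one_ne_zero (Real.volume_singleton)
  rw [← hpre, measureReal_def, ← Measure.map_apply (by fun_prop) measurableSet_Iio, hstd,
    cdf_eq_real, measureReal_def, ← Iio_union_right, measure_union (by simp) (by simp), hatom,
    add_zero]

lemma gaussianReal_real_Iio_zero (m : ℝ) {v : ℝ≥0} (hv : v ≠ 0) :
    (gaussianReal m v).real (Iio 0) = Φ (-m / √v) := by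
  rw [← gaussianReal_real_Ioi_zero _ hv, ← gaussianReal_map_neg, measureReal_def,
    measureReal_def, Measure.map_apply measurable_neg measurableSet_Ioi]
  simp

lemma map_sum_pi_gaussianReal {ι : Type*} [Fintype ι] (m : ι → ℝ) (v : ι → ℝ≥0) :
    (Measure.pi fun i => gaussianReal (m i) (v i)).map (fun x => ∑ i, x i)
      = gaussianReal (∑ i, m i) (∑ i, v i) := by
  have : IsProbabilityMeasure
      ((Measure.pi fun i => gaussianReal (m i) (v i)).map (fun x => ∑ i, x i)) :=
    Measure.isProbabilityMeasure_map (by fun_prop)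
  refine Measure.ext_of_charFun ?_
  ext t
  simp only [charFun_map_sum_pi_eq_prod, Finset.prod_apply, charFun_gaussianReal,
    ← Complex.exp_sum]
  congr 1
  push_cast
  simp only [Finset.sum_sub_distrib, Finset.mul_sum, Finset.sum_mul, Finset.sum_div]

lemma map_prod_add_eq_conv {α β : Type*} [MeasurableSpace α] [MeasurableSpace β]
    (μ₁ : Measure α) (μ₂ : Measure β) [SFinite μ₁] [SFinite μ₂] {f₁ : α → ℝ} {f₂ : β → ℝ}
    (hf₁ : Measurable f₁) (hf₂ : Measurable f₂) :
    (μ₁.prod μ₂).map (fun p => f₁ p.1 + f₂ p.2) = μ₁.map f₁ ∗ μ₂.map f₂ := by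
  rw [Measure.conv, Measure.map_prod_map _ _ hf₁ hf₂, Measure.map_map (by fun_prop) (by fun_prop)]
  rfl

section Vectors

variable {d : ℕ}

instance (m : Vec d) (v : ℝ) : IsProbabilityMeasure (gaussVec d m v) := by
  unfold gaussVec
  infer_instance

lemma sq_vnorm (v : Vec d) : vnorm v ^ 2 = ∑ i, v i ^ 2 :=
  Real.sq_sqrt (by positivity)

lemma dot_self_eq_sq_vnorm (v : Vec d) : dot v v = vnorm v ^ 2 := by
  simp only [sq_vnorm, dot, ← sq]

lemma vnorm_nonneg (v : Vec d) : 0 ≤ vnorm v :=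
  Real.sqrt_nonneg _

lemma dot_le_vnorm_mul_vnorm (v w : Vec d) : dot v w ≤ vnorm v * vnorm w :=
  Real.sum_mul_le_sqrt_mul_sqrt _ v w

lemma vnorm_pos {v : Vec d} (hv : v ≠ 0) : 0 < vnorm v := by
  obtain ⟨i, hi⟩ := Function.ne_iff.1 hv
  exact Real.sqrt_pos.2 <|
    Finset.sum_pos' (fun j _ => sq_nonneg (v j)) ⟨i, Finset.mem_univ i, pow_two_pos_of_ne_zero hi⟩

lemma vnorm_smul (c : ℝ) (v : Vec d) : vnorm (c • v) = |c| * vnorm v := by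
  rw [vnorm, vnorm, ← Real.sqrt_sq_eq_abs, ← Real.sqrt_mul (sq_nonneg c), Finset.mul_sum]
  simp only [Pi.smul_apply, smul_eq_mul, mul_pow]

lemma dot_smul_left (c : ℝ) (v w : Vec d) : dot (c • v) w = c * dot v w := by
  simp only [dot, Finset.mul_sum, Pi.smul_apply, smul_eq_mul, mul_assoc]

lemma pred_smul (c : ℝ) (w x : Inp d) : pred (c • w) x = c * pred w x := by
  simp only [pred, Prod.smul_fst, Prod.smul_snd, dot_smul_left]
  ring

@[fun_prop]
lemma measurable_dot (v : Vec d) : Measurable (dot v) := by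
  unfold dot
  fun_prop

lemma measurable_pred (w : Inp d) : Measurable (pred w) := by
  unfold pred
  fun_prop

lemma map_dot_gaussVec (c m : Vec d) {v : ℝ} (hv : 0 ≤ v) :
    (gaussVec d m v).map (dot c)
      = gaussianReal (dot c m) (vnorm c ^ 2 * v).toNNReal := by
  have hdot : dot c = (fun x : Vec d => ∑ i, x i) ∘ fun x i => c i * x i := rfl
  rw [gaussVec, hdot, ← Measure.map_map (by fun_prop) (by fun_prop),
    Measure.pi_map_pi (fun i => by fun_prop)]
  simp only [gaussianReal_map_const_mul]
  rw [map_sum_pi_gaussianReal]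
  congr 1
  ext
  rw [NNReal.coe_sum, Real.coe_toNNReal _ (by positivity), sq_vnorm, Finset.sum_mul]
  simp [hv]

end Vectors

lemma Real.sign_mul_of_pos {r : ℝ} (hr : 0 < r) (x : ℝ) : Real.sign (r * x) = Real.sign x := by
  rcases lt_trichotomy x 0 with hx | rfl | hx
  · rw [Real.sign_of_neg hx, Real.sign_of_neg (mul_neg_of_pos_of_neg hr hx)]
  · rw [mul_zero]
  · rw [Real.sign_of_pos hx, Real.sign_of_pos (mul_pos hr hx)]

lemma Real.sign_eq_one_iff {x : ℝ} : Real.sign x = 1 ↔ 0 < x := by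
  rcases lt_trichotomy x 0 with hx | rfl | hx
  · norm_num [Real.sign_of_neg hx, hx.not_gt]
  · simp
  · simp [Real.sign_of_pos hx, hx]

lemma Real.sign_eq_neg_one_iff {x : ℝ} : Real.sign x = -1 ↔ x < 0 := by
  rcases lt_trichotomy x 0 with hx | rfl | hx
  · simp [Real.sign_of_neg hx, hx]
  · simp
  · norm_num [Real.sign_of_pos hx, hx.not_gt]

lemma AccP_smul {d : ℕ} (P : Measure (Inp d × ℝ)) {r : ℝ} (hr : 0 < r) (w : Inp d) :
    AccP P (r • w) = AccP P w := by
  simp only [AccP, pred_smul, Real.sign_mul_of_pos hr]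

lemma AccP_jointOf {d : ℕ} (cond : ℝ → Measure (Inp d)) [IsFiniteMeasure (cond 1)]
    [IsFiniteMeasure (cond (-1))] (w : Inp d) :
    AccP (jointOf cond) w
      = ((cond 1).map (pred w)).real (Ioi 0) / 2 + ((cond (-1)).map (pred w)).real (Iio 0) / 2 := by
  have hpos : (fun x => (x, (1 : ℝ))) ⁻¹' {p : Inp d × ℝ | Real.sign (pred w p.1) = p.2}
      = pred w ⁻¹' Ioi 0 := by
    ext x
    simp [Real.sign_eq_one_iff]
  have hneg : (fun x => (x, (-1 : ℝ))) ⁻¹' {p : Inp d × ℝ | Real.sign (pred w p.1) = p.2}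
      = pred w ⁻¹' Iio 0 := by
    ext x
    simp [Real.sign_eq_neg_one_iff]
  rw [AccP, jointOf, Measure.add_apply, Measure.smul_apply, Measure.smul_apply,
    Measure.prod_dirac, Measure.prod_dirac, (measurableEmbedding_prod_mk_right _).map_apply,
    (measurableEmbedding_prod_mk_right _).map_apply, hpos, hneg,
    ← Measure.map_apply (measurable_pred w) measurableSet_Ioi,
    ← Measure.map_apply (measurable_pred w) measurableSet_Iio, smul_eq_mul, smul_eq_mul,
    ENNReal.toReal_add (by finiteness) (by finiteness), ENNReal.toReal_mul, ENNReal.toReal_mul]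
  simp [measureReal_def, div_eq_inv_mul]

lemma AccP_jointOf_zero {d : ℕ} (cond : ℝ → Measure (Inp d)) [IsFiniteMeasure (cond 1)]
    [IsFiniteMeasure (cond (-1))] : AccP (jointOf cond) 0 = 0 := by
  have hpred : pred (0 : Inp d) = fun _ => 0 := funext fun x => by simp [pred, dot]
  rw [AccP_jointOf, hpred]
  simp [Measure.map_const, measureReal_def]

section ContextC2

variable {d : ℕ} {σ γ η : ℝ}

instance (μ : Vec d) (σ γ η y : ℝ) : IsProbabilityMeasure (condX2 d μ σ γ η y) := by
  unfold condX2
  infer_instance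

noncomputable def c2Var (σ γ η : ℝ) (u : Inp d) : ℝ :=
  σ ^ 2 * vnorm u.1 ^ 2 + σ ^ 2 / γ * vnorm u.2.1 ^ 2 + η ^ 2 * vnorm u.2.2 ^ 2

lemma map_pred_condX2 (hγ : 0 < γ) (μ : Vec d) (u : Inp d) (y : ℝ) :
    (condX2 d μ σ γ η y).map (pred u)
      = gaussianReal (y * (dot u.1 μ - dot u.2.1 μ) - dot u.2.2 μ) (c2Var σ γ η u).toNNReal := by
  have hpred : pred u = fun x => dot u.1 x.1 + (dot u.2.1 x.2.1 + dot u.2.2 x.2.2) :=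
    funext fun x => add_assoc _ _ _
  rw [condX2, hpred,
    map_prod_add_eq_conv (f₂ := fun x : Vec d × Vec d => dot u.2.1 x.1 + dot u.2.2 x.2) _ _
      (by fun_prop) (by fun_prop), map_prod_add_eq_conv _ _ (by fun_prop) (by fun_prop),
    map_dot_gaussVec _ _ (by positivity), map_dot_gaussVec _ _ (by positivity),
    map_dot_gaussVec _ _ (by positivity), gaussianReal_conv_gaussianReal,
    gaussianReal_conv_gaussianReal, ← Real.toNNReal_add (by positivity) (by positivity),
    ← Real.toNNReal_add (by positivity) (by positivity), c2Var]
  congr 1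
  · simp only [dot, Finset.mul_sum, ← Finset.sum_sub_distrib, ← Finset.sum_add_distrib]
    exact Finset.sum_congr rfl fun i _ => by ring
  · ring_nf

lemma c2Var_pos (hσ : 0 < σ) (hγ : 0 < γ) (hη : 0 < η) {u : Inp d} (hu : u ≠ 0) :
    0 < c2Var σ γ η u := by
  have hblock : u.1 ≠ 0 ∨ u.2.1 ≠ 0 ∨ u.2.2 ≠ 0 := by
    contrapose! hu
    exact Prod.ext hu.1 (Prod.ext hu.2.1 hu.2.2)
  unfold c2Var
  rcases hblock with h | h | h <;> have := vnorm_pos h <;> positivity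

lemma AccP_Pc2 (hσ : 0 < σ) (hγ : 0 < γ) (hη : 0 < η) (μ : Vec d) {u : Inp d} (hu : u ≠ 0) :
    AccP (Pc2 d μ σ γ η) u
      = (Φ ((dot u.1 μ - dot u.2.1 μ - dot u.2.2 μ) / √(c2Var σ γ η u))
        + Φ ((dot u.1 μ - dot u.2.1 μ + dot u.2.2 μ) / √(c2Var σ γ η u))) / 2 := by
  have hV := c2Var_pos hσ hγ hη hu
  have hV' : (c2Var σ γ η u).toNNReal ≠ 0 := by simpa using hV
  rw [Pc2, AccP_jointOf, map_pred_condX2 hγ, map_pred_condX2 hγ,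
    gaussianReal_real_Ioi_zero _ hV', gaussianReal_real_Iio_zero _ hV',
    Real.coe_toNNReal _ hV.le, add_div]
  congr 3 <;> ring

lemma c2_margin_le (hσ : 0 < σ) (hγ : 0 < γ) (μ : Vec d) (u : Inp d) :
    dot u.1 μ - dot u.2.1 μ ≤ vnorm μ * √(1 + γ) / σ * √(c2Var σ γ η u) := by
  set a := vnorm u.1
  set b := vnorm u.2.1
  have hcs : dot u.1 μ - dot u.2.1 μ ≤ (a + b) * vnorm μ := by
    have h₁ := dot_le_vnorm_mul_vnorm u.1 μ
    have h₂ := dot_le_vnorm_mul_vnorm ((-1 : ℝ) • u.2.1) μ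
    rw [dot_smul_left, vnorm_smul, abs_neg, abs_one, one_mul] at h₂
    linarith
  have hweighted : (a + b) ^ 2 ≤ (1 + γ) * (a ^ 2 + b ^ 2 / γ) := by
    have hsq : (1 + γ) * (a ^ 2 + b ^ 2 / γ) - (a + b) ^ 2 = (γ * a - b) ^ 2 / γ := by
      field_simp
      ring
    have := div_nonneg (sq_nonneg (γ * a - b)) hγ.le
    linarith
  have hvar : σ * (a + b) ≤ √(1 + γ) * √(c2Var σ γ η u) := by
    rw [← Real.sqrt_mul (by positivity)]
    refine Real.le_sqrt_of_sq_le ?_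
    have hc : 0 ≤ (1 + γ) * (η ^ 2 * vnorm u.2.2 ^ 2) := by positivity
    calc (σ * (a + b)) ^ 2 = σ ^ 2 * (a + b) ^ 2 := by ring
      _ ≤ σ ^ 2 * ((1 + γ) * (a ^ 2 + b ^ 2 / γ)) := by gcongr
      _ ≤ (1 + γ) * c2Var σ γ η u := by
        rw [show c2Var σ γ η u = σ ^ 2 * a ^ 2 + σ ^ 2 / γ * b ^ 2 + η ^ 2 * vnorm u.2.2 ^ 2
          from rfl]
        linear_combination hc
  have hL := vnorm_nonneg μ
  calc dot u.1 μ - dot u.2.1 μ ≤ (a + b) * vnorm μ := hcs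
    _ = vnorm μ / σ * (σ * (a + b)) := by field_simp
    _ ≤ vnorm μ / σ * (√(1 + γ) * √(c2Var σ γ η u)) := by gcongr
    _ = vnorm μ * √(1 + γ) / σ * √(c2Var σ γ η u) := by ring

lemma AccP_Pc2_optimal (hσ : 0 < σ) (hγ : 0 < γ) (hη : 0 < η) {μ : Vec d} (hμ : μ ≠ 0) :
    AccP (Pc2 d μ σ γ η) (μ, -γ • μ, 0) = Φ (vnorm μ * √(1 + γ) / σ) := by
  have hL := vnorm_pos hμ
  have hvar : c2Var σ γ η ((μ, -γ • μ, 0) : Inp d) = (σ * vnorm μ * √(1 + γ)) ^ 2 := by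
    have h0 : vnorm (0 : Vec d) = 0 := by simp [vnorm]
    rw [c2Var]
    dsimp only
    rw [vnorm_smul, abs_neg, abs_of_pos hγ, h0, mul_pow, mul_pow, Real.sq_sqrt (by positivity)]
    field_simp
    ring
  have hmargin : (dot μ μ - dot (-γ • μ) μ) / (σ * vnorm μ * √(1 + γ))
      = vnorm μ * √(1 + γ) / σ := by
    rw [dot_smul_left, dot_self_eq_sq_vnorm]
    field_simp
    rw [Real.sq_sqrt (by positivity)]
    ring
  have hzero : dot (0 : Vec d) μ = 0 := by simp [dot]
  rw [AccP_Pc2 hσ hγ hη μ fun h => hμ (congrArg Prod.fst h), hvar, Real.sqrt_sq (by positivity)]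
  simp only [hzero, sub_zero, add_zero, hmargin]
  ring

end ContextC2

theorem bayes_optimal_linear_predictor_c2_general (d : ℕ) (μ : Vec d) (hμ : μ ≠ 0)
    (σ γ η : ℝ) (hσ : 0 < σ) (hγ : 0 < γ) (hη : 0 < η)
    (w : Inp d) :
    AccP (Pc2 d μ σ γ η) w ≤
      AccP (Pc2 d μ σ γ η)
        ((1 / (vnorm μ * Real.sqrt (1 + γ ^ 2))) • ((μ, -γ • μ, (0 : Vec d)) : Inp d)) := by
  have hL := vnorm_pos hμ
  rw [AccP_smul _ (by positivity), AccP_Pc2_optimal hσ hγ hη hμ]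
  rcases eq_or_ne w 0 with rfl | hw
  · rw [Pc2, AccP_jointOf_zero]
    exact cdf_nonneg _ _
  have hV := Real.sqrt_pos.2 (c2Var_pos hσ hγ hη hw)
  have hsum : (dot w.1 μ - dot w.2.1 μ - dot w.2.2 μ) / √(c2Var σ γ η w)
      + (dot w.1 μ - dot w.2.1 μ + dot w.2.2 μ) / √(c2Var σ γ η w)
      ≤ 2 * (vnorm μ * √(1 + γ) / σ) := by
    rw [← add_div, div_le_iff₀ hV]
    linarith [c2_margin_le (η := η) hσ hγ μ w]
  rw [AccP_Pc2 hσ hγ hη μ hw]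
  linarith [cdf_gaussianReal_add_cdf_le (by positivity) hsum]

theorem bayes_optimal_linear_predictor_c2 (d : ℕ) (hd : 1 ≤ d) (μ : Vec d) (hμ : μ ≠ 0)
    (σ γ η : ℝ) (hσ : 0 < σ) (hγ : 0 < γ) (hη : 0 < η)
    (w : Inp d) (hw : w ∈ W1 d) :
    AccP (Pc2 d μ σ γ η) w ≤
      AccP (Pc2 d μ σ γ η)
        ((1 / (vnorm μ * Real.sqrt (1 + γ ^ 2))) • ((μ, -γ • μ, (0 : Vec d)) : Inp d)) :=
  bayes_optimal_linear_predictor_c2_general d μ hμ σ γ η hσ hγ hη w
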